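/- arXiv:2005.12380 — 3 statements merged into one kernel-verified Lean document; each statement's English description precedes it below -/
import Mathlib

section
/- Let D be an integral domain with fraction field K and let A ∈ D^{n×n} admit a permutation-free LD⁻¹U decomposition A = L · D_g^{−1} · U. Then for all indices 1 ≤ k ≤ j ≤ n, the entry U_{kj} equals the determinant of the k×k matrix whose first k−1 columns are the entries A_{s,t} for 1 ≤ s ≤ k, 1 ≤ t ≤ k−1, and whose last column is (A_{1,j}, …, A_{k,j}); that is, U_{kj} is the k×k minor of A taken from rows 1,…,k and columns 1,…,k−1,j. -/
/-- The diagonal matrix `D_g = diag(p₁, p₁p₂, p₂p₃, …, p_{n−1}p_n)` built from the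
pivots `p : Fin n → D`. -/
def bareissDiag {D : Type*} [CommRing D] {n : ℕ} (p : Fin n → D) :
    Matrix (Fin n) (Fin n) D :=
  Matrix.diagonal fun i =>
    (if (i : ℕ) = 0 then 1
      else p ⟨(i : ℕ) - 1, lt_of_le_of_lt (Nat.sub_le _ _) i.isLt⟩) * p i

/-!
Restricted to rows `0, …, k`, the factorisation only involves the leading `(k+1) × (k+1)`
blocks of `L` and `D_g⁻¹`, because both are lower triangular. Hence the minor is
`det L' · (det D_g')⁻¹ · det U'`, where `U'` (rows `0, …, k`, columns `0, …, k-1, j` of `U`) is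
upper triangular. The determinants are `∏_{i ≤ k} pᵢ`, `∏_{i < k} pᵢ · ∏_{i ≤ k} pᵢ` and
`∏_{i < k} pᵢ · U k j`, so everything cancels except `U k j`.
-/

open Matrix

def leadingCols {n : ℕ} (k j : Fin n) : Fin ((k : ℕ) + 1) → Fin n :=
  fun t => if (t : ℕ) < (k : ℕ) then Fin.castLE k.isLt t else j

section Triangular

variable {R ι κ : Type*}

theorem Matrix.submatrix_castLE_mul_of_isLowerTriangular [NonUnitalNonAssocSemiring R]
    {m n : ℕ} (h : m ≤ n) {L : Matrix (Fin n) (Fin n) R} (hL : L.IsLowerTriangular)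
    (M : Matrix (Fin n) ι R) (c : κ → ι) :
    (L * M).submatrix (Fin.castLE h) c =
      L.submatrix (Fin.castLE h) (Fin.castLE h) * M.submatrix (Fin.castLE h) c := by
  ext s t
  simp only [submatrix_apply, mul_apply]
  refine .trans ?_ (Finset.sum_map _ (Fin.castLEEmb h) fun x => L (Fin.castLE h s) x * M x (c t))
  refine (Finset.sum_subset (Finset.subset_univ _) fun x _ hx => ?_).symm
  have hmx : m ≤ x := by
    by_contra! hxm
    exact hx (Finset.mem_map.mpr ⟨⟨x, hxm⟩, Finset.mem_univ _, rfl⟩)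
  rw [hL (i := Fin.castLE h s) (j := x) (s.isLt.trans_le hmx), zero_mul]

theorem Matrix.det_submatrix_inv_diagonal [Field R] [DecidableEq ι] [DecidableEq κ]
    [Fintype ι] [Fintype κ] {v : ι → R} (hv : ∀ i, v i ≠ 0) {e : κ → ι}
    (he : Function.Injective e) :
    ((diagonal v)⁻¹.submatrix e e).det = ((diagonal v).submatrix e e).det⁻¹ := by
  have hinv : (diagonal v)⁻¹ = diagonal v⁻¹ := by
    refine inv_eq_left_inv ?_
    rw [diagonal_mul_diagonal, ← diagonal_one]
    exact congrArg diagonal (funext fun i => inv_mul_cancel₀ (hv i))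
  rw [hinv, submatrix_diagonal _ _ he, submatrix_diagonal _ _ he, det_diagonal,
    det_diagonal, ← Finset.prod_inv_distrib]
  rfl

theorem Matrix.det_submatrix_castLE_of_isLowerTriangular [CommRing R] {m n : ℕ}
    (h : m ≤ n) {L : Matrix (Fin n) (Fin n) R} (hL : L.IsLowerTriangular) :
    (L.submatrix (Fin.castLE h) (Fin.castLE h)).det = ∏ i : Fin m, L.diag (Fin.castLE h i) :=
  det_of_isLowerTriangular _ fun _ _ hij => hL hij

theorem Matrix.det_submatrix_leadingCols_of_isUpperTriangular [CommRing R] {n : ℕ}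
    {U : Matrix (Fin n) (Fin n) R} (hU : U.IsUpperTriangular) (k j : Fin n) :
    (U.submatrix (Fin.castLE k.isLt) (leadingCols k j)).det =
      (∏ i : Fin k, U.diag (Fin.castLE k.isLt i.castSucc)) * U k j := by
  have hlast : leadingCols k j (Fin.last k) = j := if_neg (lt_irrefl _)
  have hinit (i : Fin k) : leadingCols k j i.castSucc = Fin.castLE k.isLt i.castSucc :=
    if_pos i.isLt
  have htri : (U.submatrix (Fin.castLE k.isLt) (leadingCols k j)).IsUpperTriangular := by
    intro a b hba
    have hbk : (b : ℕ) < k :=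
      Nat.lt_of_lt_of_le (show (b : ℕ) < a from hba) (Nat.lt_succ_iff.mp a.isLt)
    rw [submatrix_apply, leadingCols, if_pos hbk]
    exact hU hba
  rw [det_of_isUpperTriangular htri, Fin.prod_univ_castSucc]
  simp only [submatrix_apply, hinit, hlast, diag_apply]
  rfl

end Triangular

section Bareiss

variable {R S : Type*} [CommRing R] [CommRing S]

theorem bareissDiag_map (f : R →+* S) {n : ℕ} (p : Fin n → R) :
    (bareissDiag p).map f = bareissDiag (f ∘ p) := by
  rw [bareissDiag, diagonal_map (map_zero f), bareissDiag]
  congr 1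
  ext i
  simp [apply_ite f]

theorem bareissDiag_submatrix_castLE {m n : ℕ} (h : m ≤ n) (p : Fin n → R) :
    (bareissDiag p).submatrix (Fin.castLE h) (Fin.castLE h) = bareissDiag (p ∘ Fin.castLE h) :=
  submatrix_diagonal _ _ (Fin.castLE_injective h)

theorem det_bareissDiag {m : ℕ} (p : Fin (m + 1) → R) :
    (bareissDiag p).det = (∏ i : Fin m, p i.castSucc) * ∏ i, p i := by
  rw [bareissDiag, det_diagonal, Finset.prod_mul_distrib, Fin.prod_univ_succ]
  simp only [Fin.val_zero, if_true, one_mul, Fin.val_succ, Nat.add_one_ne_zero, if_false]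
  rfl

end Bareiss

theorem det_submatrix_leadingCols_mul_inv_bareissDiag_mul {K : Type*} [Field K] {n : ℕ}
    {L U : Matrix (Fin n) (Fin n) K} (hL : L.IsLowerTriangular) (hU : U.IsUpperTriangular)
    (hdiag : ∀ i, U i i = L i i) (hp : ∀ i, L i i ≠ 0) (k j : Fin n) :
    ((L * (bareissDiag L.diag)⁻¹ * U).submatrix (Fin.castLE k.isLt) (leadingCols k j)).det =
      U k j := by
  have hDinv : ((bareissDiag L.diag)⁻¹).IsLowerTriangular := by
    rw [bareissDiag, inv_diagonal]
    exact blockTriangular_diagonal _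
  have hDdet : (((bareissDiag L.diag)⁻¹).submatrix (Fin.castLE k.isLt) (Fin.castLE k.isLt)).det
      = ((bareissDiag L.diag).submatrix (Fin.castLE k.isLt) (Fin.castLE k.isLt)).det⁻¹ :=
    det_submatrix_inv_diagonal
      (fun i => mul_ne_zero (by split_ifs; exacts [one_ne_zero, hp _]) (hp i))
      (Fin.castLE_injective _)
  rw [Matrix.mul_assoc, submatrix_castLE_mul_of_isLowerTriangular _ hL,
    submatrix_castLE_mul_of_isLowerTriangular _ hDinv, det_mul, det_mul, hDdet,
    bareissDiag_submatrix_castLE, det_bareissDiag, det_submatrix_castLE_of_isLowerTriangular _ hL,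
    det_submatrix_leadingCols_of_isUpperTriangular hU]
  simp only [diag_apply, Function.comp_apply, hdiag]
  have hne {m : ℕ} (e : Fin m → Fin n) : ∏ i, L (e i) (e i) ≠ 0 :=
    Finset.prod_ne_zero_iff.mpr fun i _ => hp (e i)
  have hleading := hne (Fin.castLE k.isLt)
  have hinit := hne fun i : Fin k => Fin.castLE k.isLt i.castSucc
  field_simp

theorem stmt2_general {D K : Type*} [CommRing D] [Field K] [Algebra D K]
    [IsFractionRing D K] {n : ℕ} (A L U : Matrix (Fin n) (Fin n) D)
    (hL : ∀ i j : Fin n, (i : ℕ) < (j : ℕ) → L i j = 0)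
    (hU : ∀ i j : Fin n, (j : ℕ) < (i : ℕ) → U i j = 0)
    (hdiag : ∀ i : Fin n, U i i = L i i)
    (hp : ∀ i : Fin n, L i i ≠ 0)
    (hA : A.map (algebraMap D K) =
      L.map (algebraMap D K) *
        ((bareissDiag fun i : Fin n => L i i).map (algebraMap D K))⁻¹ *
        U.map (algebraMap D K))
    (k j : Fin n) :
    U k j = (Matrix.of fun s t : Fin ((k : ℕ) + 1) =>
      A (Fin.castLE k.isLt s)
        (if (t : ℕ) < (k : ℕ) then Fin.castLE k.isLt t else j)).det := by
  have hinj : Function.Injective (algebraMap D K) := IsFractionRing.injective D K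
  have hL' : L.IsLowerTriangular := fun i j h => hL i j h
  have hU' : U.IsUpperTriangular := fun i j h => hU i j h
  apply hinj
  change _ = algebraMap D K (A.submatrix (Fin.castLE k.isLt) (leadingCols k j)).det
  rw [RingHom.map_det, RingHom.mapMatrix_apply, ← submatrix_map, hA, bareissDiag_map]
  exact (det_submatrix_leadingCols_mul_inv_bareissDiag_mul (hL'.map (algebraMap D K))
    (hU'.map (algebraMap D K)) (fun i => congrArg (algebraMap D K) (hdiag i))
    (fun i => (map_ne_zero_iff _ hinj).mpr (hp i)) k j).symm

/-- In a permutation-free `L D⁻¹ U` decomposition `A = L · D_g⁻¹ · U`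
over the fraction field, for `k ≤ j` the entry `U k j` is the minor of `A` formed from
rows `0, …, k` and columns `0, …, k-1, j` (0-indexed). -/
theorem stmt2 {D K : Type*} [CommRing D] [IsDomain D] [Field K] [Algebra D K]
    [IsFractionRing D K] {n : ℕ} (A L U : Matrix (Fin n) (Fin n) D)
    (hL : ∀ i j : Fin n, (i : ℕ) < (j : ℕ) → L i j = 0)
    (hU : ∀ i j : Fin n, (j : ℕ) < (i : ℕ) → U i j = 0)
    (hdiag : ∀ i : Fin n, U i i = L i i)
    (hp : ∀ i : Fin n, L i i ≠ 0)
    (hA : A.map (algebraMap D K) =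
      L.map (algebraMap D K) *
        ((bareissDiag fun i : Fin n => L i i).map (algebraMap D K))⁻¹ *
        U.map (algebraMap D K))
    (k j : Fin n) (hkj : k ≤ j) :
    U k j = (Matrix.of fun s t : Fin ((k : ℕ) + 1) =>
      A (Fin.castLE k.isLt s)
        (if (t : ℕ) < (k : ℕ) then Fin.castLE k.isLt t else j)).det :=
  stmt2_general A L U hL hU hdiag hp hA k j
end

section
/- Let D be a GCD domain with fraction field K and let A ∈ D^{n×n} admit a permutation-free LD⁻¹U decomposition A = L · D_g^{−1} · U with pivots p_1, …, p_n. Then d_1* divides the (1,1) entry p_1 of D_g, and for every k with 2 ≤ k ≤ n the product d_{k−1}* · d_k* of consecutive determinantal divisors of A divides the (k,k) entry p_{k−1}p_k of D_g. -/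
namespace Matrix

section LeadingSubmatrix

variable {R : Type*} {n m : ℕ} {ι κ : Type*}

theorem submatrix_castLE_mul_of_isLowerTriangular_s5 [NonUnitalNonAssocSemiring R]
    {X : Matrix (Fin n) (Fin n) R} (hX : X.IsLowerTriangular) (h : m ≤ n)
    (Y : Matrix (Fin n) ι R) (c : κ → ι) :
    (X * Y).submatrix (Fin.castLE h) c =
      X.submatrix (Fin.castLE h) (Fin.castLE h) * Y.submatrix (Fin.castLE h) c := by
  ext i j
  refine (Fintype.sum_of_injective _ (Fin.castLE_injective h) _ _ ?_ fun _ => rfl).symm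
  rintro t ht
  suffices Fin.castLE h i < t from mul_eq_zero_of_left (hX this) _
  by_contra! hle
  exact ht ⟨⟨t, lt_of_le_of_lt hle i.isLt⟩, rfl⟩

theorem submatrix_castLE_mul_of_isUpperTriangular [NonUnitalNonAssocSemiring R]
    {Y : Matrix (Fin n) (Fin n) R} (hY : Y.IsUpperTriangular) (h : m ≤ n)
    (X : Matrix ι (Fin n) R) (r : κ → ι) :
    (X * Y).submatrix r (Fin.castLE h) =
      X.submatrix r (Fin.castLE h) * Y.submatrix (Fin.castLE h) (Fin.castLE h) := by
  ext i j
  refine (Fintype.sum_of_injective _ (Fin.castLE_injective h) _ _ ?_ fun _ => rfl).symm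
  rintro t ht
  suffices Fin.castLE h j < t from mul_eq_zero_of_right _ (hY this)
  by_contra! hle
  exact ht ⟨⟨t, lt_of_le_of_lt hle j.isLt⟩, rfl⟩

theorem IsUpperTriangular.submatrix_of_strictMono [Zero R] [Preorder ι] [Preorder κ]
    {M : Matrix ι ι R} (hM : M.IsUpperTriangular) {f : κ → ι} (hf : StrictMono f) :
    (M.submatrix f f).IsUpperTriangular :=
  fun _ _ hij => hM (hf hij)

theorem IsLowerTriangular.submatrix_of_strictMono [Zero R] [Preorder ι] [Preorder κ]
    {M : Matrix ι ι R} (hM : M.IsLowerTriangular) {f : κ → ι} (hf : StrictMono f) :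
    (M.submatrix f f).IsLowerTriangular :=
  fun _ _ hij => hM (hf hij)

theorem det_submatrix_castLE_lower_mul_mul_upper [CommRing R]
    {X Z : Matrix (Fin n) (Fin n) R} (hX : X.IsLowerTriangular) (hZ : Z.IsUpperTriangular)
    (Y : Matrix (Fin n) (Fin n) R) (h : m ≤ n) :
    ((X * Y * Z).submatrix (Fin.castLE h) (Fin.castLE h)).det =
      (∏ i, X (Fin.castLE h i) (Fin.castLE h i)) *
        (Y.submatrix (Fin.castLE h) (Fin.castLE h)).det *
        ∏ i, Z (Fin.castLE h i) (Fin.castLE h i) := by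
  rw [submatrix_castLE_mul_of_isUpperTriangular hZ,
    submatrix_castLE_mul_of_isLowerTriangular_s5 hX, det_mul, det_mul,
    det_of_isLowerTriangular _ (hX.submatrix_of_strictMono (Fin.strictMono_castLE h)),
    det_of_isUpperTriangular (hZ.submatrix_of_strictMono (Fin.strictMono_castLE h))]
  rfl

theorem inv_diagonal_of_ne_zero {K : Type*} [Field K] [Fintype ι] [DecidableEq ι]
    {v : ι → K} (hv : ∀ i, v i ≠ 0) : (diagonal v)⁻¹ = diagonal fun i => (v i)⁻¹ :=
  inv_eq_left_inv <| by
    rw [diagonal_mul_diagonal, ← diagonal_one]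
    exact congrArg diagonal (funext fun i => inv_mul_cancel₀ (hv i))

end LeadingSubmatrix

section BareissDiag

variable {R : Type*} [CommRing R] {n : ℕ}

theorem bareissDiag_map {S : Type*} [CommRing S] (f : R →+* S) (p : Fin n → R) :
    (bareissDiag p).map f = bareissDiag (f ∘ p) := by
  simp [bareissDiag, diagonal_map, apply_ite f]

theorem prod_bareissDiag_castLE_mul (p : Fin n → R) (k : Fin n) :
    (∏ i : Fin (k + 1), bareissDiag p (Fin.castLE k.isLt i) (Fin.castLE k.isLt i)) * p k =
      (∏ i : Fin (k + 1), p (Fin.castLE k.isLt i)) ^ 2 := by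
  simp only [bareissDiag, diagonal_apply_eq, Finset.prod_mul_distrib]
  rw [Fin.prod_univ_succ, Fin.prod_univ_castSucc]
  have hlast : Fin.castLE k.isLt (Fin.last k) = k := rfl
  simp only [Fin.val_castLE, Fin.val_succ, Fin.val_zero, ↓reduceIte, Nat.add_one_sub_one,
    Nat.add_one_ne_zero, hlast, one_mul]
  -- `p ⟨i, _⟩` and `p (Fin.castLE _ i.castSucc)` are equal only up to unfolding `Fin.castLE`
  ring!

theorem det_submatrix_castLE_mul_bareissDiag_inv_mul {K : Type*} [Field K]
    {L U : Matrix (Fin n) (Fin n) K} (hL : L.IsLowerTriangular) (hU : U.IsUpperTriangular)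
    (hdiag : ∀ i, U i i = L i i) (hp : ∀ i, L i i ≠ 0) (k : Fin n) :
    ((L * (bareissDiag fun i => L i i)⁻¹ * U).submatrix
      (Fin.castLE k.isLt) (Fin.castLE k.isLt)).det = L k k := by
  have hprod := prod_bareissDiag_castLE_mul (fun i => L i i) k
  have hP : ∏ i : Fin (k + 1), L (Fin.castLE k.isLt i) (Fin.castLE k.isLt i) ≠ 0 :=
    Finset.prod_ne_zero_iff.mpr fun i _ => hp _
  simp only [bareissDiag, diagonal_apply_eq] at hprod
  rw [det_submatrix_castLE_lower_mul_mul_upper hL hU, bareissDiag,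
    inv_diagonal_of_ne_zero fun i => mul_ne_zero (by split_ifs <;> simp [hp]) (hp i),
    submatrix_diagonal _ _ (Fin.castLE_injective _), det_diagonal]
  simp only [hdiag, Function.comp_apply, Finset.prod_inv_distrib]
  generalize (∏ i : Fin (k + 1), L (Fin.castLE k.isLt i) (Fin.castLE k.isLt i)) = P at *
  generalize (∏ i : Fin (k + 1), _ : K) = Q at *
  have hQ : Q ≠ 0 := left_ne_zero_of_mul (hprod ▸ pow_ne_zero 2 hP)
  rw [mul_right_comm, ← sq, ← hprod]
  field_simp

theorem det_submatrix_castLE_of_map_eq_mul_bareissDiag_inv_mul {D K : Type*} [CommRing D]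
    [Field K] {φ : D →+* K} (hφ : Function.Injective φ) {A L U : Matrix (Fin n) (Fin n) D}
    (hL : L.IsLowerTriangular) (hU : U.IsUpperTriangular) (hdiag : ∀ i, U i i = L i i)
    (hp : ∀ i, L i i ≠ 0)
    (hA : A.map φ = L.map φ * ((bareissDiag fun i => L i i).map φ)⁻¹ * U.map φ) (k : Fin n) :
    (A.submatrix (Fin.castLE k.isLt) (Fin.castLE k.isLt)).det = L k k := by
  apply hφ
  rw [RingHom.map_det, RingHom.mapMatrix_apply, ← submatrix_map, hA, bareissDiag_map]
  exact det_submatrix_castLE_mul_bareissDiag_inv_mul (hL.map φ) (hU.map φ)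
    (fun i => by simp [hdiag]) (fun i => (map_ne_zero_iff φ hφ).mpr (hp i)) k

end BareissDiag

end Matrix

theorem stmt5_general {D K : Type*} [CommRing D] [Field K]
    [Algebra D K] [IsFractionRing D K] {n : ℕ} (A L U : Matrix (Fin n) (Fin n) D)
    (hL : ∀ i j : Fin n, (i : ℕ) < (j : ℕ) → L i j = 0)
    (hU : ∀ i j : Fin n, (j : ℕ) < (i : ℕ) → U i j = 0)
    (hdiag : ∀ i : Fin n, U i i = L i i)
    (hp : ∀ i : Fin n, L i i ≠ 0)
    (hA : A.map (algebraMap D K) =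
      L.map (algebraMap D K) *
        ((bareissDiag fun i : Fin n => L i i).map (algebraMap D K))⁻¹ *
        U.map (algebraMap D K))
    (d : Fin n → D)
    (hd1 : ∀ (k : Fin n) (I J : Fin ((k : ℕ) + 1) → Fin n), StrictMono I →
      StrictMono J → d k ∣ (A.submatrix I J).det) :
    (∀ h0 : 0 < n, d ⟨0, h0⟩ ∣ L ⟨0, h0⟩ ⟨0, h0⟩) ∧
    (∀ k : Fin n, 0 < (k : ℕ) →
      d ⟨(k : ℕ) - 1, lt_of_le_of_lt (Nat.sub_le _ _) k.isLt⟩ * d k ∣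
        L ⟨(k : ℕ) - 1, lt_of_le_of_lt (Nat.sub_le _ _) k.isLt⟩
            ⟨(k : ℕ) - 1, lt_of_le_of_lt (Nat.sub_le _ _) k.isLt⟩ * L k k) := by
  have hdvd : ∀ k : Fin n, d k ∣ L k k := fun k => by
    rw [← Matrix.det_submatrix_castLE_of_map_eq_mul_bareissDiag_inv_mul
      (IsFractionRing.injective D K) (fun i j hij => hL i j hij) (fun i j hij => hU i j hij)
      hdiag hp hA k]
    exact hd1 k _ _ (Fin.strictMono_castLE _) (Fin.strictMono_castLE _)
  exact ⟨fun _ => hdvd _, fun k _ => mul_dvd_mul (hdvd _) (hdvd k)⟩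

/-- (Corollary 8 of the paper.)  Let `A = L · D_g⁻¹ · U` be a
permutation-free `L D⁻¹ U` decomposition over a GCD domain, and for each `k` let
`d k` be a gcd of all `(k+1) × (k+1)` minors of `A` (the determinantal divisors,
0-indexed).  Then `d 0` divides the `(0,0)` entry `p 0` of `D_g`, and for `k ≥ 1`
the product `d (k-1) * d k` divides the `(k,k)` entry `p (k-1) * p k` of `D_g`. -/
theorem stmt5 {D K : Type*} [CommRing D] [IsDomain D] [GCDMonoid D] [Field K]
    [Algebra D K] [IsFractionRing D K] {n : ℕ} (A L U : Matrix (Fin n) (Fin n) D)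
    (hL : ∀ i j : Fin n, (i : ℕ) < (j : ℕ) → L i j = 0)
    (hU : ∀ i j : Fin n, (j : ℕ) < (i : ℕ) → U i j = 0)
    (hdiag : ∀ i : Fin n, U i i = L i i)
    (hp : ∀ i : Fin n, L i i ≠ 0)
    (hA : A.map (algebraMap D K) =
      L.map (algebraMap D K) *
        ((bareissDiag fun i : Fin n => L i i).map (algebraMap D K))⁻¹ *
        U.map (algebraMap D K))
    (d : Fin n → D)
    (hd1 : ∀ (k : Fin n) (I J : Fin ((k : ℕ) + 1) → Fin n), StrictMono I →
      StrictMono J → d k ∣ (A.submatrix I J).det)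
    (hd2 : ∀ (k : Fin n) (c : D), (∀ I J : Fin ((k : ℕ) + 1) → Fin n, StrictMono I →
      StrictMono J → c ∣ (A.submatrix I J).det) → c ∣ d k) :
    (∀ h0 : 0 < n, d ⟨0, h0⟩ ∣ L ⟨0, h0⟩ ⟨0, h0⟩) ∧
    (∀ k : Fin n, 0 < (k : ℕ) →
      d ⟨(k : ℕ) - 1, lt_of_le_of_lt (Nat.sub_le _ _) k.isLt⟩ * d k ∣
        L ⟨(k : ℕ) - 1, lt_of_le_of_lt (Nat.sub_le _ _) k.isLt⟩
            ⟨(k : ℕ) - 1, lt_of_le_of_lt (Nat.sub_le _ _) k.isLt⟩ * L k k) :=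
  stmt5_general A L U hL hU hdiag hp hA d hd1
end

section
/- Let D be an integral domain with fraction field K and let A ∈ D^{n×n} be symmetric (A = Aᵗ). Suppose A admits a permutation-free LD⁻¹U decomposition A = L · D_g^{−1} · U. Then U = Lᵗ, so that A = L · D_g^{−1} · Lᵗ. -/
open Matrix

/-- (Theorem 11 of the paper, fraction-free Cholesky.)  If a symmetric
matrix `A` over an integral domain `D` admits a permutation-free `L D⁻¹ U`
decomposition `A = L · D_g⁻¹ · U` over the fraction field `K`, then `U = Lᵗ`,
so that `A = L · D_g⁻¹ · Lᵗ`. -/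
theorem stmt9 {D K : Type*} [CommRing D] [IsDomain D] [Field K] [Algebra D K]
    [IsFractionRing D K] {n : ℕ} (A L U : Matrix (Fin n) (Fin n) D)
    (hsymm : A = Aᵀ)
    (hL : ∀ i j : Fin n, (i : ℕ) < (j : ℕ) → L i j = 0)
    (hU : ∀ i j : Fin n, (j : ℕ) < (i : ℕ) → U i j = 0)
    (hdiag : ∀ i : Fin n, U i i = L i i)
    (hp : ∀ i : Fin n, L i i ≠ 0)
    (hA : A.map (algebraMap D K) =
      L.map (algebraMap D K) *
        ((bareissDiag fun i : Fin n => L i i).map (algebraMap D K))⁻¹ *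
        U.map (algebraMap D K)) :
    U = Lᵀ ∧
    A.map (algebraMap D K) =
      L.map (algebraMap D K) *
        ((bareissDiag fun i : Fin n => L i i).map (algebraMap D K))⁻¹ *
        (Lᵀ).map (algebraMap D K) := by
  have hinj : Function.Injective (algebraMap D K) := IsFractionRing.injective D K
  set f := algebraMap D K with hf
  set L' : Matrix (Fin n) (Fin n) K := L.map f with hL'def
  set U' : Matrix (Fin n) (Fin n) K := U.map f with hU'def
  -- the diagonal matrix over K
  have hfz : f 0 = 0 := map_zero f
  set d : Fin n → D := fun i =>
    (if (i : ℕ) = 0 then 1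
      else L ⟨(i : ℕ) - 1, lt_of_le_of_lt (Nat.sub_le _ _) i.isLt⟩
        ⟨(i : ℕ) - 1, lt_of_le_of_lt (Nat.sub_le _ _) i.isLt⟩) * L i i with hd
  have hDg : (bareissDiag fun i : Fin n => L i i).map f = diagonal (fun i => f (d i)) := by
    rw [bareissDiag, diagonal_map hfz]
  have hdi : ∀ i, d i ≠ 0 := by
    intro i
    refine mul_ne_zero ?_ (hp i)
    split
    · exact one_ne_zero
    · exact hp _
  have hdne : ∀ i, f (d i) ≠ 0 := fun i h => hdi i (hinj (h.trans hfz.symm))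
  rw [hDg] at hA ⊢
  set Dg : Matrix (Fin n) (Fin n) K := diagonal (fun i => f (d i)) with hDgdef
  -- nonzero f-images of pivots
  have hfp : ∀ i, f (L i i) ≠ 0 := fun i h => hp i (hinj (h.trans hfz.symm))
  -- triangularity
  have hL'low : BlockTriangular L' OrderDual.toDual := fun i j hij => by
    simp only [hL'def, map_apply]
    rw [hL i j (by exact_mod_cast hij), hfz]
  have hU'up : BlockTriangular U' id := fun i j hij => by
    simp only [hU'def, map_apply]
    rw [hU i j (by exact_mod_cast hij), hfz]
  have hL'Tup : BlockTriangular L'ᵀ id := fun i j hij => by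
    simp only [hL'def, transpose_apply, map_apply]
    rw [hL j i (by exact_mod_cast hij), hfz]
  have hU'Tlow : BlockTriangular U'ᵀ OrderDual.toDual := fun i j hij => by
    simp only [hU'def, transpose_apply, map_apply]
    rw [hU j i (by exact_mod_cast hij), hfz]
  -- invertibility
  have hdetL : L'.det ≠ 0 := by
    rw [det_of_lowerTriangular L' hL'low]
    exact Finset.prod_ne_zero_iff.2 fun i _ => hfp i
  have hdetU : U'.det ≠ 0 := by
    rw [det_of_upperTriangular hU'up]
    have : ∀ i : Fin n, U' i i ≠ 0 := fun i => by
      simp only [hU'def, map_apply, hdiag i]; exact hfp i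
    exact Finset.prod_ne_zero_iff.2 fun i _ => this i
  have hdetDg : Dg.det ≠ 0 := by
    rw [hDgdef, det_diagonal]
    exact Finset.prod_ne_zero_iff.2 fun i _ => hdne i
  haveI : Invertible L' := L'.invertibleOfIsUnitDet (isUnit_iff_ne_zero.2 hdetL)
  haveI : Invertible U' := U'.invertibleOfIsUnitDet (isUnit_iff_ne_zero.2 hdetU)
  haveI : Invertible Dg := Dg.invertibleOfIsUnitDet (isUnit_iff_ne_zero.2 hdetDg)
  haveI : Invertible U'ᵀ := U'.invertibleTranspose
  -- symmetry over K
  have heq : L' * Dg⁻¹ * U' = U'ᵀ * Dg⁻¹ * L'ᵀ := by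
    have h1 : (A.map f)ᵀ = A.map f := by
      rw [← transpose_map]; rw [← hsymm]
    have h2 : Dg⁻¹ᵀ = Dg⁻¹ := by
      rw [transpose_nonsing_inv]
      congr 1
      rw [hDgdef, diagonal_transpose]
    calc L' * Dg⁻¹ * U' = A.map f := hA.symm
      _ = (A.map f)ᵀ := h1.symm
      _ = (L' * Dg⁻¹ * U')ᵀ := by rw [hA]
      _ = U'ᵀ * Dg⁻¹ * L'ᵀ := by rw [transpose_mul, transpose_mul, h2, mul_assoc]
  -- the middle matrix
  set M : Matrix (Fin n) (Fin n) K := (U'ᵀ)⁻¹ * L' with hM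
  have hM2 : M = Dg⁻¹ * L'ᵀ * U'⁻¹ * Dg := by
    have h3 : (U'ᵀ)⁻¹ * (L' * Dg⁻¹ * U') = Dg⁻¹ * L'ᵀ := by
      rw [heq, ← mul_assoc, ← mul_assoc, inv_mul_of_invertible, one_mul]
    have h4 : M * Dg⁻¹ * U' = Dg⁻¹ * L'ᵀ := by
      rw [hM, mul_assoc, mul_assoc, ← mul_assoc L', h3]
    calc M = M * Dg⁻¹ * U' * U'⁻¹ * Dg := by
            rw [Matrix.mul_inv_cancel_right_of_invertible,
              mul_assoc, inv_mul_of_invertible, mul_one]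
      _ = Dg⁻¹ * L'ᵀ * U'⁻¹ * Dg := by rw [h4]
  have hMlow : BlockTriangular M OrderDual.toDual :=
    (blockTriangular_inv_of_blockTriangular hU'Tlow).mul hL'low
  have hMup : BlockTriangular M id := by
    rw [hM2]
    have hDup : BlockTriangular Dg id := by
      rw [hDgdef]; exact blockTriangular_diagonal _
    have hDinvup : BlockTriangular Dg⁻¹ id := blockTriangular_inv_of_blockTriangular hDup
    exact ((hDinvup.mul hL'Tup).mul (blockTriangular_inv_of_blockTriangular hU'up)).mul hDup
  -- M is diagonal
  have hMdiag : M = diagonal (fun i => M i i) := by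
    ext i j
    rcases lt_trichotomy i j with h | h | h
    · rw [hMlow (by exact h), diagonal_apply_ne _ (ne_of_lt h)]
    · subst h; rw [diagonal_apply_eq]
    · rw [hMup (by exact h), diagonal_apply_ne _ (ne_of_gt h)]
  -- U'ᵀ * M = L'
  have hUM : U'ᵀ * M = L' := by
    rw [hM, mul_inv_cancel_left_of_invertible]
  -- diagonal entries of M are 1
  have hMone : M = 1 := by
    rw [hMdiag]
    have hdione : ∀ i, M i i = 1 := by
      intro i
      have := congrFun (congrFun hUM i) i
      rw [hMdiag] at this
      rw [mul_diagonal] at this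
      have hUii : U'ᵀ i i = f (L i i) := by
        simp [hU'def, hdiag i]
      have hLii : L' i i = f (L i i) := by simp [hL'def]
      rw [hUii, hLii] at this
      field_simp [hfp i] at this
      exact this
    rw [show (fun i => M i i) = fun _ => (1 : K) from funext hdione, diagonal_one]
  have hLU : L' = U'ᵀ := by rw [← hUM, hMone, mul_one]
  have hULT : U = Lᵀ := by
    ext i j
    apply hinj
    have := congrFun (congrFun hLU j) i
    simp only [hL'def, hU'def, map_apply, transpose_apply] at this ⊢
    exact this.symm
  refine ⟨hULT, ?_⟩
  rw [← hULT]; exact hA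
end
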